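/- Let a, b > 0. The normalized nodal length of the eigenfunctions u_{1,j} satisfies ((1−1)b + (j−1)a)/√((π/a)² + (πj/b)²) = (j−1)a/√((π/a)² + (πj/b)²) → ab/π as j → ∞. Combined with the universal lower bound H¹(N(u_{k,j}))/√λ_{k,j} ≥ ab/π − (a+b)/√λ_{k,j}, this shows that the liminf of H¹(N(u))/√λ over all Dirichlet eigenfunctions of the rectangle as λ → ∞ equals (1/π)·Area(R). -/

import Mathlib

/-!
Writing `λ = (πk/a)² + (πj/b)²`, one has `(ab/π)·√λ = √((kb)² + (ja)²) ≤ kb + ja`, so the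
normalized nodal length `((k-1)b + (j-1)a)/√λ` is at least `ab/π - (a+b)/√λ`, and this lower
bound tends to `ab/π` as `λ → ∞`. Along `k = 1` the reverse inequality holds up to this error,
since `√λ ≥ πj/b`, so the eigenfunctions `u_{1,j}` realize the liminf.
-/

open Filter Topology Real

noncomputable section

variable (a b : ℝ)

/-- The Dirichlet eigenvalue `λ_{k,j}` of `[0,a] × [0,b]`, indexed by `p = (k, j)`. -/
def rectEigenvalue (p : ℕ × ℕ) : ℝ := (π * p.1 / a) ^ 2 + (π * p.2 / b) ^ 2

/-- The closed form of the nodal length `H¹(N(u_{k,j}))`, indexed by `p = (k, j)`. -/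
def rectNodalLength (p : ℕ × ℕ) : ℝ := ((p.1 : ℝ) - 1) * b + ((p.2 : ℝ) - 1) * a

end

theorem Real.sqrt_sq_add_sq_le_add {u v : ℝ} (hu : 0 ≤ u) (hv : 0 ≤ v) :
    √(u ^ 2 + v ^ 2) ≤ u + v :=
  (sqrt_le_left (add_nonneg hu hv)).2 (by nlinarith)

lemma tendsto_sub_div_sqrt_atTop {α : Type*} {l : Filter α} {f : α → ℝ}
    (hf : Tendsto f l atTop) (c d : ℝ) :
    Tendsto (fun x => c - d / √(f x)) l (𝓝 c) := by
  simpa using tendsto_const_nhds.sub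
    (tendsto_const_nhds (x := d).div_atTop (tendsto_sqrt_atTop.comp hf))

section

variable {a b : ℝ}

lemma div_pi_mul_sqrt_rectEigenvalue (ha : 0 < a) (hb : 0 < b) (p : ℕ × ℕ) :
    a * b / π * √(rectEigenvalue a b p) = √((p.1 * b) ^ 2 + (p.2 * a) ^ 2) := by
  rw [← sqrt_sq (by positivity : 0 ≤ a * b / π), ← sqrt_mul (sq_nonneg _), rectEigenvalue]
  congr 1
  field_simp

lemma div_pi_sub_le_rectNodalLength_div (ha : 0 < a) (hb : 0 < b) {p : ℕ × ℕ}
    (hp : 0 < rectEigenvalue a b p) :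
    a * b / π - (a + b) / √(rectEigenvalue a b p)
      ≤ rectNodalLength a b p / √(rectEigenvalue a b p) := by
  have hs : 0 < √(rectEigenvalue a b p) := sqrt_pos.2 hp
  have key : a * b / π * √(rectEigenvalue a b p) ≤ p.1 * b + p.2 * a := by
    rw [div_pi_mul_sqrt_rectEigenvalue ha hb]
    exact sqrt_sq_add_sq_le_add (by positivity) (by positivity)
  rw [sub_le_iff_le_add, ← add_div, le_div_iff₀ hs, rectNodalLength]
  linarith

lemma rectNodalLength_one_div_le (ha : 0 < a) (hb : 0 < b) (j : ℕ) :
    rectNodalLength a b (1, j) / √(rectEigenvalue a b (1, j)) ≤ a * b / π := by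
  have hs : 0 < √(rectEigenvalue a b (1, j)) := sqrt_pos.2 (by simp [rectEigenvalue]; positivity)
  have key : (j : ℝ) * a ≤ a * b / π * √(rectEigenvalue a b (1, j)) := by
    rw [div_pi_mul_sqrt_rectEigenvalue ha hb]
    exact le_sqrt_of_sq_le (by nlinarith)
  rw [div_le_iff₀ hs, rectNodalLength]
  push_cast
  linarith

lemma tendsto_rectEigenvalue_one_atTop (hb : b ≠ 0) :
    Tendsto (fun j : ℕ => rectEigenvalue a b (1, j)) atTop atTop := by
  have hj : Tendsto (fun j : ℕ => (π / b) ^ 2 * (j : ℝ) ^ 2) atTop atTop :=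
    ((tendsto_pow_atTop two_ne_zero).comp tendsto_natCast_atTop_atTop).const_mul_atTop
      (by positivity)
  refine (tendsto_atTop_add_const_left _ ((π / a) ^ 2) hj).congr fun j => ?_
  simp only [rectEigenvalue, Nat.cast_one, mul_one]
  ring

lemma tendsto_rectNodalLength_one_div (ha : 0 < a) (hb : 0 < b) :
    Tendsto (fun j : ℕ => rectNodalLength a b (1, j) / √(rectEigenvalue a b (1, j))) atTop
      (𝓝 (a * b / π)) := by
  have hEig := tendsto_rectEigenvalue_one_atTop (a := a) hb.ne'
  refine tendsto_of_tendsto_of_tendsto_of_le_of_le' (tendsto_sub_div_sqrt_atTop hEig _ (a + b))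
    tendsto_const_nhds ?_ (Eventually.of_forall (rectNodalLength_one_div_le ha hb))
  filter_upwards [hEig.eventually_gt_atTop 0] with j hj
  exact div_pi_sub_le_rectNodalLength_div ha hb hj

end

lemma Filter.liminf_eq_of_le_of_tendsto_comp {α β : Type*} {L : Filter α} {l : Filter β}
    [l.NeBot] {f g : α → ℝ} {φ : β → α} {c : ℝ} (hgf : ∀ᶠ x in L, g x ≤ f x)
    (hg : Tendsto g L (𝓝 c)) (hφ : Tendsto φ l L) (hfφ : Tendsto (f ∘ φ) l (𝓝 c)) :
    liminf f L = c := by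
  have hbdd : L.IsBoundedUnder (· ≥ ·) f := hg.isBoundedUnder_ge.mono_ge hgf
  have hcobdd : (map φ l).IsCoboundedUnder (· ≥ ·) f := hfφ.isCoboundedUnder_ge
  have : L.NeBot := hφ.neBot
  refine le_antisymm ?_ ?_
  · exact (hφ.liminf_le_liminf_comp hcobdd hbdd).trans_eq hfφ.liminf_eq
  · exact hg.liminf_eq.symm.trans_le
      (liminf_le_liminf hgf hg.isBoundedUnder_ge (hcobdd.mono (map_mono hφ)))

/-- The normalized nodal lengths of the eigenfunctions `u_{1,j}` of the rectangle,
namely `(j−1)a/√((π/a)² + (πj/b)²)`, converge to `ab/π` as `j → ∞`; combined with the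
universal lower bound, the liminf of `H¹(N(u))/√λ` over all Dirichlet eigenfunctions
of the rectangle as `λ → ∞` equals `(1/π)·Area(R) = (1/π)·ab`. -/
theorem stmt_8 (a b : ℝ) (ha : 0 < a) (hb : 0 < b) :
    Tendsto (fun j : ℕ =>
        ((j : ℝ) - 1) * a / Real.sqrt ((Real.pi / a) ^ 2 + (Real.pi * j / b) ^ 2))
      atTop (𝓝 (a * b / Real.pi))
    ∧ liminf
        (fun p : ℕ × ℕ =>
          (((p.1 : ℝ) - 1) * b + ((p.2 : ℝ) - 1) * a) /
            Real.sqrt ((Real.pi * p.1 / a) ^ 2 + (Real.pi * p.2 / b) ^ 2))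
        ((comap (fun p : ℕ × ℕ => (Real.pi * p.1 / a) ^ 2 + (Real.pi * p.2 / b) ^ 2) atTop)
          ⊓ 𝓟 {p : ℕ × ℕ | 0 < p.1 ∧ 0 < p.2})
        = 1 / Real.pi * (a * b) := by
  have hone := tendsto_rectNodalLength_one_div ha hb
  refine ⟨by simpa [rectNodalLength, rectEigenvalue] using hone, ?_⟩
  change liminf (fun p => rectNodalLength a b p / √(rectEigenvalue a b p))
    (comap (rectEigenvalue a b) atTop ⊓ 𝓟 {p : ℕ × ℕ | 0 < p.1 ∧ 0 < p.2}) = _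
  set L := comap (rectEigenvalue a b) atTop ⊓ 𝓟 {p : ℕ × ℕ | 0 < p.1 ∧ 0 < p.2}
  have hEig : Tendsto (rectEigenvalue a b) L atTop := tendsto_comap.mono_left inf_le_left
  have hφ : Tendsto (fun j : ℕ => (1, j)) atTop L :=
    tendsto_inf.2 ⟨tendsto_comap_iff.2 (tendsto_rectEigenvalue_one_atTop hb.ne'),
      tendsto_principal.2 (eventually_gt_atTop 0 |>.mono fun j hj => ⟨one_pos, hj⟩)⟩
  rw [one_div_mul_eq_div]
  refine liminf_eq_of_le_of_tendsto_comp ?_ (tendsto_sub_div_sqrt_atTop hEig _ (a + b)) hφ hone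
  filter_upwards [hEig.eventually_gt_atTop 0] with p hp
  exact div_pi_sub_le_rectNodalLength_div ha hb hp
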